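/- (Theorem: comparable implies preceding, α = π/4) Let u, v ∈ Sym(n) with u <_B v in the Bruhat order. Then for every y ∈ [0, h_n] there holds H(B_n(u), y) ≤ H(B_n(v), y), where H(B, y) is the x-coordinate of the unique point on the border B with y-coordinate y. -/

import Mathlib

open Real Finset

/-!
With `α = π/4` every edge vector `(-cos θ, sin θ)` has `θ ∈ [π/4, 3π/4]`, so it lies in the cone
`|x| ≤ y`. Hence every border is the graph of a 1-Lipschitz function of the height, all borders
span the same heights, and precedence is transitive. It thus suffices to treat a Bruhat cover
`v = (a b) * u` with `a < b`, for which the length condition forces `u⁻¹ a < u⁻¹ b`, i.e. the edge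
of `B(u)` at position `a` has the smaller angle. `B(v)` swaps the edges at positions `a` and `b`:
outside them the two borders coincide, between them `B(v)` is `B(u)` translated by
`β_b - β_a = (Δx, Δy)` with `|Δy| ≤ Δx` (sum-to-product formulas), and a point on one of the two
swapped edges of `B(v)` is compared with the matching edge of `B(u)`.
-/

/-- The underlying vector β_n^k(α). -/
noncomputable def beta (n : ℕ) (α : ℝ) (k : ℕ) : ℝ × ℝ :=
  (-(Real.cos (((k : ℝ) - 1) * (Real.pi - 2 * α) / ((n : ℝ) - 1) + α)),
    Real.sin (((k : ℝ) - 1) * (Real.pi - 2 * α) / ((n : ℝ) - 1) + α))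

/-- Coxeter length of a permutation = number of inversions. -/
def invLen {n : ℕ} (w : Equiv.Perm (Fin n)) : ℕ :=
  ((Finset.univ : Finset (Fin n × Fin n)).filter (fun p => p.1 < p.2 ∧ w p.2 < w p.1)).card

/-- The c-th vertex (partial sum of the first c edge vectors) of the border of w. -/
noncomputable def vert (n : ℕ) (α : ℝ) (w : Equiv.Perm (Fin n)) (c : ℕ) : ℝ × ℝ :=
  ∑ i ∈ Finset.univ.filter (fun i : Fin n => (i : ℕ) < c), beta n α ((w⁻¹ i).val + 1)

/-- The border of w: the piecewise-linear path from the origin. -/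
noncomputable def border (n : ℕ) (α : ℝ) (w : Equiv.Perm (Fin n)) : Set (ℝ × ℝ) :=
  ⋃ i ∈ Finset.range n, segment ℝ (vert n α w i) (vert n α w (i + 1))

/-- The strong Bruhat order: transitive extension of w <_B wt when ℓ(wt) = ℓ(w) + 1. -/
def BruhatLt {n : ℕ} (u v : Equiv.Perm (Fin n)) : Prop :=
  Relation.TransGen
    (fun x y => (∃ a b : Fin n, a ≠ b ∧ y = Equiv.swap a b * x) ∧ invLen y = invLen x + 1) u v

def Steep (v : ℝ × ℝ) : Prop := |v.1| ≤ v.2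

namespace Steep

lemma zero : Steep 0 := by simp [Steep]

lemma add {v w : ℝ × ℝ} (hv : Steep v) (hw : Steep w) : Steep (v + w) :=
  (abs_add_le _ _).trans (add_le_add hv hw)

lemma smul {v : ℝ × ℝ} (hv : Steep v) {t : ℝ} (ht : 0 ≤ t) : Steep (t • v) := by
  simpa [Steep, abs_mul, abs_of_nonneg ht] using mul_le_mul_of_nonneg_left hv ht

lemma sum {ι : Type*} {s : Finset ι} {f : ι → ℝ × ℝ} (hf : ∀ i ∈ s, Steep (f i)) :
    Steep (∑ i ∈ s, f i) :=
  Finset.sum_induction f Steep (fun _ _ => add) zero hf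

lemma snd_nonneg {v : ℝ × ℝ} (hv : Steep v) : 0 ≤ v.2 := (abs_nonneg _).trans hv

lemma abs_fst_smul_le {v : ℝ × ℝ} (hv : Steep v) (t : ℝ) : |(t • v).1| ≤ |(t • v).2| := by
  simpa [abs_mul, abs_of_nonneg hv.snd_nonneg] using
    mul_le_mul_of_nonneg_left hv (abs_nonneg t)

end Steep

section EdgePath

variable {n : ℕ} (f : Fin n → ℝ × ℝ)

noncomputable def pathVertex (c : ℕ) : ℝ × ℝ :=
  ∑ i ∈ univ.filter (fun i : Fin n => (i : ℕ) < c), f i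

noncomputable def edgePath : Set (ℝ × ℝ) :=
  ⋃ i ∈ range n, segment ℝ (pathVertex f i) (pathVertex f (i + 1))

lemma pathVertex_zero : pathVertex f 0 = 0 := by
  simp [pathVertex]

lemma pathVertex_self : pathVertex f n = ∑ i, f i := by
  simp [pathVertex]

lemma pathVertex_succ (c : Fin n) : pathVertex f (c + 1) = pathVertex f c + f c := by
  have : univ.filter (fun i : Fin n => (i : ℕ) < c + 1)
      = insert c (univ.filter (fun i : Fin n => (i : ℕ) < c)) := by
    ext i
    simp [le_iff_eq_or_lt, Fin.val_inj]
  rw [pathVertex, this, sum_insert (by simp), add_comm]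
  rfl

lemma segment_subset_edgePath (c : Fin n) :
    segment ℝ (pathVertex f c) (pathVertex f (c + 1)) ⊆ edgePath f :=
  Set.subset_biUnion_of_mem (u := fun i => segment ℝ (pathVertex f i) (pathVertex f (i + 1)))
    (by simp)

lemma mem_edgePath {p : ℝ × ℝ} :
    p ∈ edgePath f ↔ ∃ c : Fin n, ∃ t ∈ Set.Icc (0 : ℝ) 1, p = pathVertex f c + t • f c := by
  simp only [edgePath, Set.mem_iUnion, mem_range, exists_prop]
  constructor
  · rintro ⟨c, hc, hp⟩
    rw [segment_eq_image', pathVertex_succ f ⟨c, hc⟩, add_sub_cancel_left] at hp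
    obtain ⟨t, ht, rfl⟩ := hp
    exact ⟨⟨c, hc⟩, t, ht, rfl⟩
  · rintro ⟨c, t, ht, rfl⟩
    refine ⟨c, c.isLt, ?_⟩
    rw [segment_eq_image', pathVertex_succ, add_sub_cancel_left]
    exact ⟨t, ht, rfl⟩

variable {f}

lemma steep_pathVertex_sub (hf : ∀ i, Steep (f i)) {c d : ℕ} (hcd : c ≤ d) :
    Steep (pathVertex f d - pathVertex f c) := by
  have hsub : univ.filter (fun i : Fin n => (i : ℕ) < c) ⊆ univ.filter (fun i => (i : ℕ) < d) :=
    fun i => by simp only [mem_filter, mem_univ, true_and]; omega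
  rw [pathVertex, pathVertex, ← sum_sdiff_eq_sub hsub]
  exact Steep.sum fun i _ => hf i

lemma abs_fst_sub_le_of_mem_edgePath (hf : ∀ i, Steep (f i)) {p q : ℝ × ℝ}
    (hp : p ∈ edgePath f) (hq : q ∈ edgePath f) : |p.1 - q.1| ≤ |p.2 - q.2| := by
  obtain ⟨c, t, ht, rfl⟩ := (mem_edgePath f).1 hp
  obtain ⟨d, s, hs, rfl⟩ := (mem_edgePath f).1 hq
  clear hp hq
  wlog hcd : c ≤ d generalizing c d t s
  · rw [abs_sub_comm, abs_sub_comm (_ : ℝ × ℝ).2]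
    exact this d s hs c t ht (le_of_not_ge hcd)
  obtain rfl | hcd := hcd.eq_or_lt
  · have h := (hf c).abs_fst_smul_le (t - s)
    simp only [sub_smul, Prod.fst_sub, Prod.snd_sub] at h
    simpa only [Prod.fst_add, Prod.snd_add, add_sub_add_left_eq_sub] using h
  · have hsteep : Steep ((1 - t) • f c + (pathVertex f d - pathVertex f (c + 1)) + s • f d) :=
      (((hf c).smul (by linarith [ht.2])).add (steep_pathVertex_sub hf hcd)).add
        ((hf d).smul hs.1)
    have heq : (1 - t) • f c + (pathVertex f d - pathVertex f (c + 1)) + s • f d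
        = (pathVertex f d + s • f d) - (pathVertex f c + t • f c) := by
      rw [pathVertex_succ]; module
    rw [heq] at hsteep
    rw [abs_sub_comm, abs_sub_comm (_ : ℝ × ℝ).2]
    exact hsteep.trans (le_abs_self _)

lemma snd_mem_Icc_of_mem_edgePath (hf : ∀ i, Steep (f i)) {p : ℝ × ℝ}
    (hp : p ∈ edgePath f) : p.2 ∈ Set.Icc 0 (∑ i, f i).2 := by
  obtain ⟨c, t, ht, rfl⟩ := (mem_edgePath f).1 hp
  have hlow := ((steep_pathVertex_sub hf (Nat.zero_le c)).add ((hf c).smul ht.1)).snd_nonneg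
  have hhigh := ((steep_pathVertex_sub hf (Nat.succ_le_of_lt c.isLt)).add
    ((hf c).smul (sub_nonneg.2 ht.2))).snd_nonneg
  rw [pathVertex_zero, pathVertex_self, pathVertex_succ] at *
  simp only [Prod.snd_add, Prod.snd_sub, Prod.smul_snd, smul_eq_mul, Prod.snd_zero] at *
  constructor <;> nlinarith

lemma exists_mem_edgePath_snd_eq (hn : 0 < n) (hf : ∀ i, Steep (f i)) {y : ℝ}
    (hy : y ∈ Set.Icc 0 (∑ i, f i).2) : ∃ p ∈ edgePath f, p.2 = y := by
  suffices h : ∀ c ≤ n, ∀ y ∈ Set.Icc 0 (pathVertex f c).2, ∃ p ∈ edgePath f, p.2 = y by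
    exact h n le_rfl y (pathVertex_self f ▸ hy)
  intro c
  induction c with
  | zero =>
    intro _ y hy
    refine ⟨pathVertex f 0, segment_subset_edgePath f ⟨0, hn⟩ (left_mem_segment ℝ _ _), ?_⟩
    simpa [pathVertex_zero, le_antisymm_iff, and_comm] using hy
  | succ c ih =>
    intro hc y hy
    by_cases hyc : y ≤ (pathVertex f c).2
    · exact ih (by omega) y ⟨hy.1, hyc⟩
    · have hseg : y ∈ (LinearMap.snd ℝ ℝ ℝ).toAffineMap ''
          segment ℝ (pathVertex f c) (pathVertex f (c + 1)) := by
        have hmono := (steep_pathVertex_sub hf c.le_succ).snd_nonneg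
        rw [image_segment, segment_eq_Icc (by simpa using hmono)]
        exact ⟨le_of_not_ge hyc, hy.2⟩
      obtain ⟨p, hp, rfl⟩ := hseg
      exact ⟨p, segment_subset_edgePath f ⟨c, hc⟩ hp, rfl⟩

end EdgePath

def Precedes (S T : Set (ℝ × ℝ)) : Prop :=
  ∀ p ∈ S, ∀ q ∈ T, p.2 = q.2 → p.1 ≤ q.1

lemma Precedes.trans {S T U : Set (ℝ × ℝ)} (hST : Precedes S T) (hTU : Precedes T U)
    (hT : ∀ p ∈ S, ∃ r ∈ T, r.2 = p.2) : Precedes S U := by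
  intro p hp q hq hpq
  obtain ⟨r, hr, hrp⟩ := hT p hp
  exact (hST p hp r hr hrp.symm).trans (hTU r hr q hq (hrp.trans hpq))

lemma precedes_of_forall_exists {S T : Set (ℝ × ℝ)}
    (hS : ∀ p ∈ S, ∀ r ∈ S, |p.1 - r.1| ≤ |p.2 - r.2|)
    (hT : ∀ q ∈ T, ∃ r ∈ S, r.1 + |r.2 - q.2| ≤ q.1) : Precedes S T := by
  intro p hp q hq hpq
  obtain ⟨r, hr, hrq⟩ := hT q hq
  have := hS p hp r hr
  rw [hpq, abs_sub_comm q.2] at this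
  linarith [le_abs_self (p.1 - r.1)]

-- The witness `t` makes the two heights agree, or is `1` when no such `t ≤ 1` exists.
lemma exists_mul_add_abs_le {x₁ y₁ x₂ y₂ : ℝ} (h₁ : |x₁| ≤ y₁) (hy₁ : 0 < y₁) (h₂ : |x₂| ≤ y₂)
    (h : |y₂ - y₁| ≤ x₂ - x₁) {s : ℝ} (hs : s ∈ Set.Icc (0 : ℝ) 1) :
    ∃ t ∈ Set.Icc (0 : ℝ) 1, t * x₁ + |t * y₁ - s * y₂| ≤ s * x₂ := by
  obtain ⟨hx₁, -⟩ := abs_le.1 h₁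
  obtain ⟨hx₂, hx₂'⟩ := abs_le.1 h₂
  obtain ⟨hd, hd'⟩ := abs_le.1 h
  by_cases hy : s * y₂ ≤ y₁
  · refine ⟨s * y₂ / y₁,
      ⟨div_nonneg (mul_nonneg hs.1 (by linarith)) hy₁.le, (div_le_one hy₁).2 hy⟩, ?_⟩
    rw [div_mul_cancel₀ _ hy₁.ne', sub_self, abs_zero, add_zero, div_mul_eq_mul_div,
      div_le_iff₀ hy₁]
    nlinarith [mul_nonneg hs.1 (by nlinarith : 0 ≤ x₂ * y₁ - x₁ * y₂)]
  · refine ⟨1, ⟨zero_le_one, le_rfl⟩, ?_⟩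
    rw [one_mul, one_mul, abs_of_neg (by linarith)]
    nlinarith [mul_le_of_le_one_left (by linarith : 0 ≤ y₂ - x₂) hs.2]

section SwapEdges

variable {n : ℕ} (f : Fin n → ℝ × ℝ) {a b : Fin n}

lemma pathVertex_comp_swap (hab : a ≠ b) (c : ℕ) :
    pathVertex (f ∘ Equiv.swap a b) c = pathVertex f c
      + ((if (a : ℕ) < c then f b - f a else 0) + if (b : ℕ) < c then f a - f b else 0) := by
  rw [← sub_eq_iff_eq_add', pathVertex, pathVertex, ← sum_sub_distrib, sum_filter,
    sum_eq_add a b hab (fun i _ hi => by simp [Equiv.swap_apply_of_ne_of_ne hi.1 hi.2])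
      (by simp) (by simp)]
  simp

variable {f} in
theorem precedes_edgePath_comp_swap (hf : ∀ i, Steep (f i)) (hfa : 0 < (f a).2)
    (hfb : 0 < (f b).2) (hab : a < b) (hD : |(f b).2 - (f a).2| ≤ (f b).1 - (f a).1) :
    Precedes (edgePath f) (edgePath (f ∘ Equiv.swap a b)) := by
  refine precedes_of_forall_exists (fun p hp r hr => abs_fst_sub_le_of_mem_edgePath hf hp hr) ?_
  intro q hq
  obtain ⟨c, s, hs, rfl⟩ := (mem_edgePath _).1 hq
  have hW := pathVertex_comp_swap f hab.ne c
  have hab' : (a : ℕ) < b := hab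
  by_cases hca : c = a
  · subst hca
    obtain ⟨t, ht, hle⟩ := exists_mul_add_abs_le (hf c) hfa (hf b) hD hs
    refine ⟨_, (mem_edgePath f).2 ⟨c, t, ht, rfl⟩, ?_⟩
    rw [hW, if_neg (lt_irrefl _), if_neg (by omega)]
    simp only [Function.comp_apply, Equiv.swap_apply_left, Prod.fst_add, Prod.snd_add,
      Prod.smul_fst, Prod.smul_snd, smul_eq_mul, add_zero, add_sub_add_left_eq_sub]
    linarith
  by_cases hcb : c = b
  · subst hcb
    -- the corner lemma again, mirrored in `x ↦ -x` and read backwards from the common vertex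
    -- `pathVertex f (b + 1)`
    obtain ⟨t, ht, hle⟩ := exists_mul_add_abs_le (x₁ := -(f c).1) (y₁ := (f c).2)
      (x₂ := -(f a).1) (y₂ := (f a).2)
      (by rw [abs_neg]; exact hf c) hfb (by rw [abs_neg]; exact hf a)
      (by rw [abs_sub_comm]; linarith) (s := 1 - s) ⟨by linarith [hs.2], by linarith [hs.1]⟩
    refine ⟨_, (mem_edgePath f).2 ⟨c, 1 - t, ⟨by linarith [ht.2], by linarith [ht.1]⟩, rfl⟩, ?_⟩
    rw [hW, if_pos hab', if_neg (lt_irrefl _)]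
    simp only [Function.comp_apply, Equiv.swap_apply_right, Prod.fst_add, Prod.snd_add,
      Prod.smul_fst, Prod.smul_snd, Prod.fst_sub, Prod.snd_sub, smul_eq_mul, add_zero]
    have : (pathVertex f c).2 + (1 - t) * (f c).2
        - ((pathVertex f c).2 + ((f c).2 - (f a).2) + s * (f a).2)
        = -(t * (f c).2 - (1 - s) * (f a).2) := by ring
    rw [this, abs_neg]
    linarith
  · refine ⟨_, (mem_edgePath f).2 ⟨c, s, hs, rfl⟩, ?_⟩
    set D := (if (a : ℕ) < c then f b - f a else 0) + if (b : ℕ) < c then f a - f b else 0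
      with hDdef
    have hcone : |D.2| ≤ D.1 := by
      rw [hDdef]
      split_ifs <;> first | omega | simp [hD]
    rw [hW]
    simp only [Function.comp_apply, Equiv.swap_apply_of_ne_of_ne hca hcb, Prod.fst_add,
      Prod.snd_add]
    rw [add_right_comm (pathVertex f c).2, sub_add_eq_sub_sub, sub_self, zero_sub, abs_neg]
    linarith

end SwapEdges

lemma abs_cos_le_sin {θ : ℝ} (h : θ ∈ Set.Icc (π / 4) (3 * π / 4)) : |cos θ| ≤ sin θ := by
  have hcos : cos (2 * θ) ≤ 0 :=
    cos_nonpos_of_pi_div_two_le_of_le (by linarith [h.1]) (by linarith [h.2])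
  have hsin : 0 ≤ sin θ :=
    sin_nonneg_of_nonneg_of_le_pi (by linarith [h.1, pi_pos]) (by linarith [h.2, pi_pos])
  rw [cos_two_mul] at hcos
  exact abs_le_of_sq_le_sq (by nlinarith [cos_sq_add_sin_sq θ]) hsin

lemma abs_sin_sub_sin_le {A B : ℝ} (hA : π / 4 ≤ A) (hAB : A ≤ B) (hB : B ≤ 3 * π / 4) :
    |sin B - sin A| ≤ cos A - cos B := by
  have hhalf : 0 ≤ sin ((B - A) / 2) :=
    sin_nonneg_of_nonneg_of_le_pi (by linarith) (by linarith [pi_pos])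
  have hmid := abs_cos_le_sin (θ := (B + A) / 2) ⟨by linarith, by linarith⟩
  rw [sin_sub_sin, cos_sub_cos, add_comm A, show (A - B) / 2 = -((B - A) / 2) by ring, sin_neg,
    abs_mul, abs_mul, abs_of_nonneg hhalf]
  nlinarith

noncomputable def edgeAngle (n j : ℕ) : ℝ := j * (π / 2) / (n - 1) + π / 4

lemma beta_pi_div_four_succ (n j : ℕ) :
    beta n (π / 4) (j + 1) = (-cos (edgeAngle n j), sin (edgeAngle n j)) := by
  have : ((j + 1 : ℕ) - 1 : ℝ) * (π - 2 * (π / 4)) = j * (π / 2) := by push_cast; ring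
  simp only [beta, edgeAngle, this]

-- For `n = 1` the quotient is a division by zero, hence `0`.
lemma edgeAngle_mem_Icc {n j : ℕ} (hj : j < n) :
    edgeAngle n j ∈ Set.Icc (π / 4) (3 * π / 4) := by
  have hjn : (j : ℝ) ≤ n - 1 := by
    rw [le_sub_iff_add_le]; exact_mod_cast hj
  have hn : (0 : ℝ) ≤ n - 1 := (Nat.cast_nonneg j).trans hjn
  have hfrac : (j : ℝ) / (n - 1) ≤ 1 := div_le_one_of_le₀ hjn hn
  have hnonneg : 0 ≤ (j : ℝ) / (n - 1) := div_nonneg j.cast_nonneg hn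
  rw [edgeAngle, mul_div_right_comm (j : ℝ)]
  constructor <;> nlinarith [pi_pos]

lemma edgeAngle_mono {n j k : ℕ} (hjk : j ≤ k) (hk : k < n) : edgeAngle n j ≤ edgeAngle n k := by
  have hn : (0 : ℝ) ≤ n - 1 := by
    rw [sub_nonneg]; exact_mod_cast Nat.one_le_of_lt hk
  unfold edgeAngle
  gcongr

lemma steep_beta_pi_div_four_succ {n j : ℕ} (hj : j < n) : Steep (beta n (π / 4) (j + 1)) := by
  simpa [beta_pi_div_four_succ, Steep] using abs_cos_le_sin (edgeAngle_mem_Icc hj)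

lemma snd_beta_pi_div_four_succ_pos {n j : ℕ} (hj : j < n) : 0 < (beta n (π / 4) (j + 1)).2 := by
  have h := edgeAngle_mem_Icc hj
  rw [beta_pi_div_four_succ]
  exact sin_pos_of_pos_of_lt_pi (by linarith [h.1, pi_pos]) (by linarith [h.2, pi_pos])

lemma abs_snd_sub_le_fst_sub_beta {n j k : ℕ} (hjk : j ≤ k) (hk : k < n) :
    |(beta n (π / 4) (k + 1)).2 - (beta n (π / 4) (j + 1)).2|
      ≤ (beta n (π / 4) (k + 1)).1 - (beta n (π / 4) (j + 1)).1 := by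
  simp only [beta_pi_div_four_succ, neg_sub_neg]
  exact abs_sin_sub_sin_le (edgeAngle_mem_Icc (hjk.trans_lt hk)).1 (edgeAngle_mono hjk hk)
    (edgeAngle_mem_Icc hk).2

section Inversions

variable {n : ℕ}

open Equiv

def inversions (w : Perm (Fin n)) : Finset (Fin n × Fin n) :=
  univ.filter fun p => p.1 < p.2 ∧ w p.2 < w p.1

lemma mem_inversions {w : Perm (Fin n)} {p : Fin n × Fin n} :
    p ∈ inversions w ↔ p.1 < p.2 ∧ w p.2 < w p.1 := by
  simp [inversions]

lemma invLen_lt_invLen_mul_swap {w : Perm (Fin n)} {i j : Fin n} (hij : i < j) (hw : w i < w j) :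
    invLen w < invLen (w * swap i j) := by
  let φ : Fin n × Fin n → Fin n × Fin n := fun x =>
    if swap i j x.1 < swap i j x.2 then (swap i j x.1, swap i j x.2) else x
  have hmaps : Set.MapsTo φ (inversions w) ((inversions (w * swap i j)).erase (i, j)) := by
    rintro ⟨p, q⟩ hpq
    rw [mem_coe, mem_inversions] at hpq
    rw [mem_coe, mem_erase, mem_inversions]
    simp only [φ, Perm.mul_apply]
    split_ifs with h
    · refine ⟨fun hij' => ?_, h, by simpa using hpq.2⟩
      simp only [Prod.mk.injEq, swap_apply_eq_iff, swap_apply_left, swap_apply_right] at hij'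
      exact absurd (hij'.1 ▸ hij'.2 ▸ hpq.1) hij.not_gt
    · -- `swap i j` reverses only `(i, j)` and the pairs `(i, k)`, `(k, j)` with `i < k < j`;
      -- as `w i < w j`, those of the latter that are inversions of `w` stay inversions.
      simp only [swap_apply_def] at h ⊢
      split_ifs at h ⊢ <;> grind
  have hinj : Set.InjOn φ (inversions w) := by
    rintro ⟨p, q⟩ hpq ⟨p', q'⟩ hpq' he
    rw [mem_coe, mem_inversions] at hpq hpq'
    simp only [φ] at he
    split_ifs at he with h h' h' <;> simp only [Prod.mk.injEq] at he
    · simpa using he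
    · obtain ⟨rfl, rfl⟩ := he
      simp only [swap_apply_self] at h'
      exact absurd hpq.1 h'
    · obtain ⟨rfl, rfl⟩ := he
      simp only [swap_apply_self] at h
      exact absurd hpq'.1 h
    · simpa using he
  calc invLen w ≤ _ := card_le_card_of_injOn φ hmaps hinj
    _ < invLen (w * swap i j) := card_erase_lt_of_mem (by simp [mem_inversions, hij, hw])

end Inversions

section Border

variable {n : ℕ}

open Equiv

lemma inv_lt_inv_of_invLen_swap_mul {w : Perm (Fin n)} {a b : Fin n} (hab : a < b)
    (h : invLen (swap a b * w) = invLen w + 1) : w⁻¹ a < w⁻¹ b := by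
  by_contra hba
  have hlt : w⁻¹ b < w⁻¹ a := (not_lt.1 hba).lt_of_ne (by simpa using hab.ne')
  have hinc := invLen_lt_invLen_mul_swap (w := swap a b * w) hlt (by simpa using hab)
  have hw : swap a b * w * swap (w⁻¹ b) (w⁻¹ a) = w := by
    rw [swap_mul_eq_mul_swap, mul_assoc, swap_comm (w⁻¹ b), swap_mul_self, mul_one]
  rw [hw] at hinc
  omega

lemma border_swap_mul (α : ℝ) (w : Perm (Fin n)) (a b : Fin n) :
    border n α (swap a b * w) = edgePath ((fun i => beta n α ((w⁻¹ i : ℕ) + 1)) ∘ swap a b) :=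
  rfl

lemma precedes_border_of_cover {x y : Perm (Fin n)}
    (h : (∃ a b : Fin n, a ≠ b ∧ y = swap a b * x) ∧ invLen y = invLen x + 1) :
    Precedes (border n (π / 4) x) (border n (π / 4) y) := by
  obtain ⟨⟨a, b, hab, rfl⟩, hlen⟩ := h
  wlog hlt : a < b generalizing a b
  · rw [swap_comm] at hlen ⊢
    exact this b a hab.symm hlen (hab.lt_or_gt.resolve_left hlt)
  have hx := inv_lt_inv_of_invLen_swap_mul hlt hlen
  rw [border_swap_mul]
  exact precedes_edgePath_comp_swap (fun i => steep_beta_pi_div_four_succ (x⁻¹ i).isLt)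
    (snd_beta_pi_div_four_succ_pos (x⁻¹ a).isLt) (snd_beta_pi_div_four_succ_pos (x⁻¹ b).isLt) hlt
    (abs_snd_sub_le_fst_sub_beta hx.le (x⁻¹ b).isLt)

lemma exists_mem_border_snd_eq {u : Perm (Fin n)} {p : ℝ × ℝ} (hp : p ∈ border n (π / 4) u)
    (w : Perm (Fin n)) : ∃ r ∈ border n (π / 4) w, r.2 = p.2 := by
  obtain ⟨c, -⟩ := (mem_edgePath _).1 hp
  have hsum (w : Perm (Fin n)) :
      ∑ i, beta n (π / 4) ((w⁻¹ i : ℕ) + 1) = ∑ i : Fin n, beta n (π / 4) (i + 1) :=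
    Equiv.sum_comp w⁻¹ fun j => beta n (π / 4) (j + 1)
  refine exists_mem_edgePath_snd_eq c.pos (fun i => steep_beta_pi_div_four_succ (w⁻¹ i).isLt) ?_
  rw [hsum w, ← hsum u]
  exact snd_mem_Icc_of_mem_edgePath (fun i => steep_beta_pi_div_four_succ (u⁻¹ i).isLt) hp

end Border

theorem bruhat_lt_implies_precedes_general {n : ℕ} (u v : Equiv.Perm (Fin n))
    (huv : BruhatLt u v) :
    ∀ p ∈ border n (Real.pi / 4) u, ∀ q ∈ border n (Real.pi / 4) v,
      p.2 = q.2 → p.1 ≤ q.1 := by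
  induction huv with
  | single h => exact precedes_border_of_cover h
  | tail _ h ih =>
    exact Precedes.trans ih (precedes_border_of_cover h) fun p hp => exists_mem_border_snd_eq hp _

/-- Theorem `symmetric`, α = π/4: if u <_B v then B_n(u) ≺ B_n(v), i.e. at every
common height the point of B_n(u) lies weakly to the left of the point of B_n(v). -/
theorem bruhat_lt_implies_precedes {n : ℕ} (hn : 2 ≤ n) (u v : Equiv.Perm (Fin n))
    (huv : BruhatLt u v) :
    ∀ p ∈ border n (Real.pi / 4) u, ∀ q ∈ border n (Real.pi / 4) v,
      p.2 = q.2 → p.1 ≤ q.1 :=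
  bruhat_lt_implies_precedes_general u v huv
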